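/- arXiv:1301.2131 — 2 statements merged into one kernel-verified Lean document; each statement's English description precedes it below -/
import Mathlib

section
/- For s ∈ ℤ_+ and l, m ∈ ℤ, define ω_{l,m}^{(s)} = Σ_{i=0}^s binom(s,i) (-1)^{s-i} d_{l-m-i} d_{m+i} in the universal enveloping algebra of the Virasoro algebra. Then for every λ ∈ ℂ*, b ∈ ℂ, s ≥ 1, and l, m ∈ ℤ, the operator ω_{l,m}^{(s)} annihilates the module Ω(λ,b): ω_{l,m}^{(s)} · f = 0 for all f ∈ ℂ[∂]. -/
/-!
`ω_{l,m}^{(s)}` is the `s`-th forward difference at `j = m` of `j ↦ d_{l-j} d_j`. On `Ω(λ,b)`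
this operator is `f ↦ λ^l Q(j) f(∂ - l)` with `Q(j) = (∂ + (l-j)(b-1))(∂ + j(b-1) - (l-j))`
quadratic in `j`, and the `s`-th forward difference of a polynomial of degree `< s` vanishes.
-/

open Polynomial TensorProduct

/-- The Virasoro commutation relations for a family of operators `d i` (the action of the
basis vectors `d_i`) and a central operator `cc` (the action of the central element `c`) on a
complex vector space: `[d_i, d_j] = (j - i) d_{i+j} + δ_{i,-j} (i^3 - i)/12 c` and `c` central. -/
def VirRep {V : Type*} [AddCommGroup V] [Module ℂ V]
    (d : ℤ → Module.End ℂ V) (cc : Module.End ℂ V) : Prop :=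
  (∀ i : ℤ, cc * d i = d i * cc) ∧
    ∀ i j : ℤ, d i * d j - d j * d i =
      ((j : ℂ) - (i : ℂ)) • d (i + j) +
        (if i + j = 0 then ((i : ℂ) ^ 3 - (i : ℂ)) / 12 else 0) • cc

/-- A subspace invariant under the Virasoro action, i.e. a Virasoro submodule. -/
def VirInvariant {V : Type*} [AddCommGroup V] [Module ℂ V]
    (d : ℤ → Module.End ℂ V) (cc : Module.End ℂ V) (p : Submodule ℂ V) : Prop :=
  (∀ i : ℤ, ∀ v ∈ p, d i v ∈ p) ∧ ∀ v ∈ p, cc v ∈ p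

/-- The operator by which `d_n` acts on `Ω(λ, b) = ℂ[∂]`:
`f(∂) ↦ λ^n (∂ + n(b-1)) f(∂ - n)`. The central element acts by `0`. -/
noncomputable def omegaD (lam b : ℂ) (n : ℤ) : Module.End ℂ (Polynomial ℂ) where
  toFun f := lam ^ n • ((X + Polynomial.C ((n : ℂ) * (b - 1))) * f.comp (X - Polynomial.C (n : ℂ)))
  map_add' f g := by simp [add_comp, mul_add, smul_add]
  map_smul' a f := by
    simp only [RingHom.id_apply, smul_comp, mul_smul_comm]
    rw [smul_comm]

/-- The diagonal action of `d_i` on a tensor product of two Virasoro modules. -/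
noncomputable def tensorD {V W : Type*} [AddCommGroup V] [Module ℂ V] [AddCommGroup W]
    [Module ℂ W] (dV : ℤ → Module.End ℂ V) (dW : ℤ → Module.End ℂ W) (i : ℤ) :
    Module.End ℂ (V ⊗[ℂ] W) :=
  LinearMap.rTensor W (dV i) + LinearMap.lTensor V (dW i)

/-- The diagonal action of the central element on a tensor product of two Virasoro modules. -/
noncomputable def tensorC {V W : Type*} [AddCommGroup V] [Module ℂ V] [AddCommGroup W]
    [Module ℂ W] (cV : Module.End ℂ V) (cW : Module.End ℂ W) : Module.End ℂ (V ⊗[ℂ] W) :=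
  LinearMap.rTensor W cV + LinearMap.lTensor V cW

theorem Polynomial.sum_range_choose_mul_eval_add_eq_zero {R : Type*} [CommRing R] {P : R[X]}
    {n : ℕ} (hP : P.natDegree < n) (y : R) :
    ∑ k ∈ Finset.range (n + 1), ((n.choose k : R) * (-1) ^ (n - k)) * P.eval (y + k) = 0 := by
  have := congrFun (fwdDiff_iter_eq_zero_of_degree_lt hP) y
  rw [fwdDiff_iter_eq_sum_shift] at this
  simpa [zsmul_eq_mul, mul_comm] using this

theorem omegaD_apply (lam b : ℂ) (n : ℤ) (f : ℂ[X]) :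
    omegaD lam b n f = lam ^ n • ((X + C ((n : ℂ) * (b - 1))) * f.comp (X - C (n : ℂ))) :=
  rfl

theorem omegaD_omegaD {lam : ℂ} (hlam : lam ≠ 0) (b : ℂ) (n k : ℤ) (f : ℂ[X]) :
    omegaD lam b n (omegaD lam b k f) = lam ^ (n + k) •
      ((X + C ((n : ℂ) * (b - 1))) * (X + C ((k : ℂ) * (b - 1) - n)) *
        f.comp (X - C ((n + k : ℤ) : ℂ))) := by
  simp only [omegaD_apply, smul_comp, mul_comp, add_comp, X_comp, C_comp, comp_assoc, sub_comp,
    mul_smul_comm, smul_smul, ← zpow_add₀ hlam, Int.cast_add, map_add, map_sub, sub_sub]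
  congr 1
  ring

/-- The quadratic `Q(j) = (∂ + (l-j)(b-1))(∂ + j(b-1) - (l-j))` as a polynomial in `j` (the outer
variable `X`) with coefficients in `ℂ[∂]` (so `∂` is `C X`). -/
noncomputable def omegaPairSymbol (b : ℂ) (l : ℤ) : ℂ[X][X] :=
  (C X + C (C (b - 1)) * ((l : ℂ[X][X]) - X)) * (C X + C (C (b - 1)) * X - ((l : ℂ[X][X]) - X))

theorem natDegree_omegaPairSymbol_le (b : ℂ) (l : ℤ) : (omegaPairSymbol b l).natDegree ≤ 2 := by
  unfold omegaPairSymbol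
  compute_degree

theorem omegaD_sub_omegaD {lam : ℂ} (hlam : lam ≠ 0) (b : ℂ) (l j : ℤ) (f : ℂ[X]) :
    omegaD lam b (l - j) (omegaD lam b j f) =
      lam ^ l • ((omegaPairSymbol b l).eval (j : ℂ[X]) * f.comp (X - C (l : ℂ))) := by
  rw [omegaD_omegaD hlam, sub_add_cancel]
  simp only [omegaPairSymbol, eval_mul, eval_add, eval_sub, eval_C, eval_X, eval_intCast,
    Int.cast_sub, map_sub, map_mul, map_intCast]
  exact congrArg (lam ^ l • ·) (by ring)

/-- the operator `ω_{l,m}^{(s)} = Σ_{i=0}^s C(s,i) (-1)^{s-i} d_{l-m-i} d_{m+i}`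
annihilates the module `Ω(λ,b)` (for `s ≥ 3`). -/
theorem omega_operator_annihilates (lam b : ℂ) (hlam : lam ≠ 0)
    (s : ℕ) (hs : 3 ≤ s) (l m : ℤ) (f : Polynomial ℂ) :
    ∑ i ∈ Finset.range (s + 1),
      ((s.choose i : ℂ) * (-1 : ℂ) ^ (s - i)) •
        omegaD lam b (l - m - (i : ℤ)) (omegaD lam b (m + (i : ℤ)) f) = 0 := by
  have hdeg : (omegaPairSymbol b l).natDegree < s := (natDegree_omegaPairSymbol_le b l).trans_lt hs
  simp_rw [sub_sub, omegaD_sub_omegaD hlam, smul_comm _ (lam ^ l), ← Finset.smul_sum,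
    smul_eq_C_mul, ← mul_assoc, ← Finset.sum_mul, Int.cast_add, Int.cast_natCast]
  simp only [map_mul, map_pow, map_neg, map_one, map_natCast]
  rw [sum_range_choose_mul_eval_add_eq_zero hdeg, zero_mul, mul_zero]
end

section
/- Let λ ∈ ℂ*, and let V be a Virasoro module that is a highest weight module or a Whittaker module L_{ψ_n,θ} (so each vector is killed by d_l for l large). Then every submodule of Ω(λ,1) ⊗ V has the form ∂Ω(λ,1) ⊗ X₁ + Ω(λ,1) ⊗ X₂ for some submodules X₁, X₂ of V. -/
open Polynomial TensorProduct

/-! For `m` large, `d_m` kills the `V`-components of a given `w = ∑ ∂^j ⊗ v_j` (here `∂` is `X`),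
so it acts on `w` through `Ω(λ,1)` alone: `λ^{-m} d_m w = ∑ ∂(∂ - m)^j ⊗ v_j`. This is a
polynomial in `m` taking values in `M` at infinitely many points, so all its coefficients lie in
`M`. The constant coefficient is `∂ w`, hence `M` is a `ℂ[∂]`-submodule; the top coefficient is
`∂ ⊗ v_n` up to sign. Peeling off top coefficients writes `w` through `∂ℂ[∂] ⊗ X₁` and
`ℂ[∂] ⊗ X₂`, where `X₁ = {v | ∂ ⊗ v ∈ M}` and `X₂ = {v | 1 ⊗ v ∈ M}`. -/

open Finset

-- A `W ⧸ M`-valued polynomial vanishing on an infinite set is zero: test it against functionals.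
theorem Submodule.mem_of_forall_sum_pow_smul_mem {K W : Type*} [Field K] [AddCommGroup W]
    [Module K W] (M : Submodule K W) {S : Set K} (hS : S.Infinite) {n : ℕ} {c : ℕ → W}
    (h : ∀ x ∈ S, ∑ t ∈ range n, x ^ t • c t ∈ M) {t : ℕ} (ht : t < n) : c t ∈ M := by
  rw [← Submodule.Quotient.mk_eq_zero, ← Module.forall_dual_apply_eq_zero_iff K]
  intro φ
  set p : K[X] := ∑ s ∈ range n, C (φ (M.mkQ (c s))) * X ^ s
  have hp : p = 0 := by
    refine p.eq_zero_of_infinite_isRoot (hS.mono fun x hx => ?_)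
    have := congrArg φ ((Submodule.Quotient.mk_eq_zero M).2 (h x hx))
    rw [← M.mkQ_apply, map_sum, map_sum] at this
    simp only [map_smul, smul_eq_mul, map_zero] at this
    simp only [Set.mem_ofPred_eq, IsRoot, p, eval_finsetSum, eval_mul, eval_C, eval_pow, eval_X]
    simpa only [mul_comm] using this
  simpa [p, finsetSum_coeff, coeff_C_mul_X_pow, ht] using congrArg (coeff · t) hp

theorem LinearMap.eventually_lTensor_apply_eq_zero {R U V ι : Type*} [CommSemiring R]
    [AddCommMonoid U] [Module R U] [AddCommMonoid V] [Module R V] {F : Filter ι}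
    {d : ι → Module.End R V} (hd : ∀ v, ∀ᶠ l in F, d l v = 0) (w : U ⊗[R] V) :
    ∀ᶠ l in F, LinearMap.lTensor U (d l) w = 0 := by
  induction w using TensorProduct.induction_on with
  | zero => simp
  | tmul u v => filter_upwards [hd v] with l hl using by simp [hl]
  | add w w' hw hw' => filter_upwards [hw, hw'] with l h h' using by simp [h, h']

theorem Polynomial.exists_eq_sum_X_pow_tmul {R V : Type*} [CommRing R] [AddCommGroup V]
    [Module R V] (w : R[X] ⊗[R] V) :
    ∃ (n : ℕ) (v : ℕ → V), w = ∑ j ∈ range (n + 1), ((X : R[X]) ^ j) ⊗ₜ v j := by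
  set e := TensorProduct.equivFinsuppOfBasisLeft (N := V) (basisMonomials R)
  refine ⟨(e w).support.sup id, e w, ?_⟩
  conv_lhs => rw [← e.symm_apply_apply w, TensorProduct.equivFinsuppOfBasisLeft_symm_apply]
  rw [Finsupp.sum_of_support_subset _ (subset_range_sup_succ _) _ (by simp)]
  simp [coe_basisMonomials, X_pow_eq_monomial]

theorem Polynomial.X_mul_X_sub_C_pow_eq_sum {R : Type*} [CommRing R] (a : R) {j n : ℕ}
    (hj : j < n) :
    X * (X - C a) ^ j = ∑ t ∈ range n, ((-a) ^ t * j.choose t) • (X : R[X]) ^ (j - t + 1) := by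
  rw [sub_eq_neg_add, ← C_neg, add_pow, mul_sum,
    sum_subset (range_subset_range.2 hj) fun t _ ht => by
      rw [Nat.choose_eq_zero_of_lt (by simpa using ht)]; simp]
  refine sum_congr rfl fun t _ => ?_
  rw [smul_eq_C_mul, pow_succ']
  simp only [C_mul, C_pow, map_natCast]
  ring

section Slice

variable {R U W : Type*} [CommSemiring R] [AddCommMonoid U] [Module R U] [AddCommMonoid W]
  [Module R W]

def Submodule.slice (N : Submodule R (U ⊗[R] W)) (u : U) : Submodule R W :=
  N.comap (TensorProduct.mk R U W u)

theorem Submodule.mem_slice {N : Submodule R (U ⊗[R] W)} {u : U} {w : W} :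
    w ∈ N.slice u ↔ u ⊗ₜ[R] w ∈ N :=
  Iff.rfl

end Slice

section XAction

variable {R V : Type*} [CommRing R] [AddCommGroup V] [Module R V] {M : Submodule R (R[X] ⊗[R] V)}

theorem smul_mem_of_forall_X_smul_mem (hX : ∀ w ∈ M, (X : R[X]) • w ∈ M) (q : R[X])
    {w : R[X] ⊗[R] V} (hw : w ∈ M) : q • w ∈ M := by
  induction q using Polynomial.induction_on with
  | C a =>
    rw [← algebraMap_eq, algebraMap_smul]
    exact M.smul_mem a hw
  | add p q hp hq =>
    rw [add_smul]
    exact M.add_mem hp hq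
  | monomial n a h =>
    rw [pow_succ', mul_left_comm, mul_smul]
    exact hX _ h

theorem range_map_mulLeft_X_slice_le (hX : ∀ w ∈ M, (X : R[X]) • w ∈ M) :
    LinearMap.range (TensorProduct.map (LinearMap.mulLeft R (X : R[X])) (M.slice X).subtype) ≤
      M := by
  rw [range_map_eq_span_tmul, Submodule.span_le]
  rintro _ ⟨p, v, rfl⟩
  simpa [smul_tmul', mul_comm] using smul_mem_of_forall_X_smul_mem hX p v.2

theorem range_lTensor_slice_one_le (hX : ∀ w ∈ M, (X : R[X]) • w ∈ M) :
    LinearMap.range (LinearMap.lTensor R[X] (M.slice 1).subtype) ≤ M := by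
  rw [LinearMap.lTensor, range_map_eq_span_tmul, Submodule.span_le]
  rintro _ ⟨p, v, rfl⟩
  simpa [smul_tmul'] using smul_mem_of_forall_X_smul_mem hX p v.2

end XAction

section OmegaTensor

open Filter

variable {V : Type*} [AddCommGroup V] [Module ℂ V] {lam : ℂ} {d : ℤ → Module.End ℂ V}
  {M : Submodule ℂ (ℂ[X] ⊗[ℂ] V)}

theorem omegaD_one_apply (lam : ℂ) (m : ℤ) (f : ℂ[X]) :
    omegaD lam 1 m f = lam ^ m • (X * f.comp (X - C (m : ℂ))) := by
  simp [omegaD]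

theorem tensorD_tmul {U : Type*} [AddCommGroup U] [Module ℂ U] (dU : ℤ → Module.End ℂ U)
    (dV : ℤ → Module.End ℂ V) (i : ℤ) (u : U) (v : V) :
    tensorD dU dV i (u ⊗ₜ[ℂ] v) = dU i u ⊗ₜ[ℂ] v + u ⊗ₜ[ℂ] dV i v := by
  simp [tensorD]

theorem sum_choose_smul_tmul_mem (hlam : lam ≠ 0) (hnil : ∀ v, ∀ᶠ l in atTop, d l v = 0)
    (hM : ∀ i, ∀ w ∈ M, tensorD (omegaD lam 1) d i w ∈ M) {n : ℕ} {v : ℕ → V}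
    (hw : ∑ j ∈ range n, ((X : ℂ[X]) ^ j) ⊗ₜ[ℂ] v j ∈ M) {t : ℕ} (ht : t < n) :
    ∑ j ∈ range n, (j.choose t : ℂ) • (((X : ℂ[X]) ^ (j - t + 1)) ⊗ₜ[ℂ] v j) ∈ M := by
  set w := ∑ j ∈ range n, ((X : ℂ[X]) ^ j) ⊗ₜ[ℂ] v j
  obtain ⟨K, hK⟩ := eventually_atTop.1 (LinearMap.eventually_lTensor_apply_eq_zero hnil w)
  refine M.mem_of_forall_sum_pow_smul_mem
    (c := fun t => ∑ j ∈ range n, (j.choose t : ℂ) • (((X : ℂ[X]) ^ (j - t + 1)) ⊗ₜ[ℂ] v j))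
    ((Set.Ici_infinite K).image (neg_injective.comp Int.cast_injective).injOn)
    (fun x hx => ?_) ht
  obtain ⟨m, hm, rfl⟩ := hx
  have hdm : tensorD (omegaD lam 1) d m w = lam ^ m • ∑ t ∈ range n, (-(m : ℂ)) ^ t •
      ∑ j ∈ range n, (j.choose t : ℂ) • (((X : ℂ[X]) ^ (j - t + 1)) ⊗ₜ[ℂ] v j) := by
    simp_rw [smul_sum]
    rw [tensorD, LinearMap.add_apply, hK m hm, add_zero, map_sum, sum_comm]
    refine sum_congr rfl fun j hj => ?_
    rw [LinearMap.rTensor_tmul, omegaD_one_apply, pow_comp, X_comp,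
      X_mul_X_sub_C_pow_eq_sum _ (mem_range.1 hj), smul_sum, sum_tmul]
    refine sum_congr rfl fun s _ => ?_
    rw [← smul_tmul', ← smul_tmul', smul_smul, smul_smul, smul_smul, mul_assoc]
  have := hM m w hw
  rwa [hdm, M.smul_mem_iff (zpow_ne_zero m hlam)] at this

theorem X_smul_mem (hlam : lam ≠ 0) (hnil : ∀ v, ∀ᶠ l in atTop, d l v = 0)
    (hM : ∀ i, ∀ w ∈ M, tensorD (omegaD lam 1) d i w ∈ M) {w : ℂ[X] ⊗[ℂ] V} (hw : w ∈ M) :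
    (X : ℂ[X]) • w ∈ M := by
  obtain ⟨n, v, rfl⟩ := exists_eq_sum_X_pow_tmul w
  simpa [smul_sum, smul_tmul', pow_succ'] using
    sum_choose_smul_tmul_mem hlam hnil hM hw n.succ_pos

theorem X_tmul_mem_of_sum_mem (hlam : lam ≠ 0) (hnil : ∀ v, ∀ᶠ l in atTop, d l v = 0)
    (hM : ∀ i, ∀ w ∈ M, tensorD (omegaD lam 1) d i w ∈ M) {n : ℕ} {v : ℕ → V}
    (hw : ∑ j ∈ range (n + 1), ((X : ℂ[X]) ^ j) ⊗ₜ[ℂ] v j ∈ M) : (X : ℂ[X]) ⊗ₜ[ℂ] v n ∈ M := by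
  have := sum_choose_smul_tmul_mem hlam hnil hM hw n.lt_succ_self
  rwa [sum_range_succ, sum_eq_zero fun j hj => by
    rw [Nat.choose_eq_zero_of_lt (mem_range.1 hj), Nat.cast_zero, zero_smul],
    zero_add, Nat.choose_self, Nat.cast_one, one_smul, Nat.sub_self, zero_add, pow_one] at this

theorem mem_range_sup_range_of_mem (hlam : lam ≠ 0) (hnil : ∀ v, ∀ᶠ l in atTop, d l v = 0)
    (hM : ∀ i, ∀ w ∈ M, tensorD (omegaD lam 1) d i w ∈ M) {w : ℂ[X] ⊗[ℂ] V} (hw : w ∈ M) :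
    w ∈ LinearMap.range (TensorProduct.map (LinearMap.mulLeft ℂ (X : ℂ[X])) (M.slice X).subtype) ⊔
      LinearMap.range (LinearMap.lTensor ℂ[X] (M.slice 1).subtype) := by
  obtain ⟨n, v, rfl⟩ := exists_eq_sum_X_pow_tmul w
  induction n with
  | zero =>
    simp only [zero_add, range_one, sum_singleton, pow_zero] at hw ⊢
    exact Submodule.mem_sup_right ⟨1 ⊗ₜ ⟨v 0, hw⟩, rfl⟩
  | succ n ih =>
    have hX : (X : ℂ[X]) ⊗ₜ[ℂ] v (n + 1) ∈ M := X_tmul_mem_of_sum_mem hlam hnil hM hw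
    have hlast : ((X : ℂ[X]) ^ (n + 1)) ⊗ₜ[ℂ] v (n + 1) ∈ LinearMap.range
        (TensorProduct.map (LinearMap.mulLeft ℂ (X : ℂ[X])) (M.slice X).subtype) :=
      ⟨(X ^ n : ℂ[X]) ⊗ₜ ⟨v (n + 1), hX⟩, by simp [pow_succ']⟩
    have hlastM := range_map_mulLeft_X_slice_le (fun w => X_smul_mem hlam hnil hM) hlast
    rw [sum_range_succ] at hw ⊢
    exact add_mem (ih ((M.add_mem_iff_left hlastM).1 hw)) (Submodule.mem_sup_left hlast)

theorem virInvariant_slice {cV : Module.End ℂ V}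
    (hM : VirInvariant (tensorD (omegaD lam 1) d) (tensorC 0 cV) M)
    (hX : ∀ w ∈ M, (X : ℂ[X]) • w ∈ M) {f : ℂ[X]}
    (hf : ∀ i : ℤ, ∃ q : ℂ[X], X * f.comp (X - C (i : ℂ)) = q * f) :
    VirInvariant d cV (M.slice f) := by
  refine ⟨fun i v hv => ?_, fun v hv => by
    simpa [Submodule.mem_slice, tensorC] using hM.2 _ (Submodule.mem_slice.1 hv)⟩
  rw [Submodule.mem_slice] at hv ⊢
  obtain ⟨q, hq⟩ := hf i
  have := M.sub_mem (hM.1 i _ hv) (M.smul_mem (lam ^ i) (smul_mem_of_forall_X_smul_mem hX q hv))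
  rwa [tensorD_tmul, omegaD_one_apply, hq, smul_tmul', smul_tmul', smul_eq_mul,
    add_sub_cancel_left] at this

end OmegaTensor

theorem submodules_of_tensor_b_one_general {V : Type*} [AddCommGroup V] [Module ℂ V]
    (lam : ℂ) (hlam : lam ≠ 0)
    (d : ℤ → Module.End ℂ V) (cV : Module.End ℂ V)
    (hnil : ∀ v : V, ∃ K : ℤ, ∀ l : ℤ, K ≤ l → d l v = 0)
    (M : Submodule ℂ (Polynomial ℂ ⊗[ℂ] V))
    (hM : VirInvariant (tensorD (omegaD lam 1) d) (tensorC 0 cV) M) :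
    ∃ X1 X2 : Submodule ℂ V, VirInvariant d cV X1 ∧ VirInvariant d cV X2 ∧
      M = LinearMap.range
            (TensorProduct.map (LinearMap.mulLeft ℂ (X : Polynomial ℂ)) X1.subtype) ⊔
          LinearMap.range (LinearMap.lTensor (Polynomial ℂ) X2.subtype) := by
  have hnil' : ∀ v, ∀ᶠ l in Filter.atTop, d l v = 0 := fun v => Filter.eventually_atTop.2 (hnil v)
  have hX : ∀ w ∈ M, (X : ℂ[X]) • w ∈ M := fun w => X_smul_mem hlam hnil' hM.1
  refine ⟨M.slice X, M.slice 1,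
    virInvariant_slice hM hX fun i => ⟨X - C (i : ℂ), by simp [mul_comm]⟩,
    virInvariant_slice hM hX fun i => ⟨X, by simp⟩, le_antisymm ?_ ?_⟩
  · exact fun w hw => mem_range_sup_range_of_mem hlam hnil' hM.1 hw
  · exact sup_le (range_map_mulLeft_X_slice_le hX) (range_lTensor_slice_one_le hX)

/-- for `b = 1` and `V` a highest weight or Whittaker module (each vector
killed by `d_l` for `l` large), every submodule of `Ω(λ,1) ⊗ V` has the form
`∂Ω(λ,1) ⊗ X₁ + Ω(λ,1) ⊗ X₂` for submodules `X₁, X₂ ⊆ V`. -/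
theorem submodules_of_tensor_b_one {V : Type*} [AddCommGroup V] [Module ℂ V]
    (lam : ℂ) (hlam : lam ≠ 0)
    (d : ℤ → Module.End ℂ V) (cV : Module.End ℂ V) (hrep : VirRep d cV)
    (hnil : ∀ v : V, ∃ K : ℤ, ∀ l : ℤ, K ≤ l → d l v = 0)
    (M : Submodule ℂ (Polynomial ℂ ⊗[ℂ] V))
    (hM : VirInvariant (tensorD (omegaD lam 1) d) (tensorC 0 cV) M) :
    ∃ X1 X2 : Submodule ℂ V, VirInvariant d cV X1 ∧ VirInvariant d cV X2 ∧
      M = LinearMap.range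
            (TensorProduct.map (LinearMap.mulLeft ℂ (X : Polynomial ℂ)) X1.subtype) ⊔
          LinearMap.range (LinearMap.lTensor (Polynomial ℂ) X2.subtype) :=
  submodules_of_tensor_b_one_general lam hlam d cV hnil M hM
end
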